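/- arXiv:2304.04024 — 2 statements merged into one kernel-verified Lean document; each statement's English description precedes it below -/
import Mathlib

section
/- For every integer n with p/n + 1/n² ≤ 1 and n ≥ b, and every k ∈ {1,…,n} such that φ^{(n)}_j ≤ b for all j with k < j ≤ n, one has the closed form φ^{(n)}_k = ((1+b·p)/n)·Σ_{j=0}^{n-k} (1 − p/n − 1/n²)^j = ((1+b·p)/n)·(1 − (1 − p/n − 1/n²)^{n-k+1})/(p/n + 1/n²). -/
/-- Auxiliary sequence for the thresholds `φ^{(n)}_k`, counted backwards from time `n`:
`phiAux b p n m = φ^{(n)}_{n-m}`. -/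
noncomputable def phiAux (b p : ℝ) (n : ℕ) : ℕ → ℝ
  | 0 => (1 + b * p) / n
  | m + 1 =>
      (1 / (n : ℝ) ^ 2) * max (n : ℝ) (phiAux b p n m)
        + (p / n) * max b (phiAux b p n m)
        + (1 - p / n - 1 / (n : ℝ) ^ 2) * max 0 (phiAux b p n m)

/-- The threshold `φ^{(n)}_k`: the expected future reward of the optimal rule at time `k`
given that the value `a` has already been probed.  Defined by `φ^{(n)}_n = (1+b·p)/n` and,
for `1 ≤ k < n`,
`φ^{(n)}_k = (1/n²)·max(n, φ^{(n)}_{k+1}) + (p/n)·max(b, φ^{(n)}_{k+1})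
  + (1 − p/n − 1/n²)·max(0, φ^{(n)}_{k+1})`. -/
noncomputable def phi (b p : ℝ) (n k : ℕ) : ℝ := phiAux b p n (n - k)

/-- Auxiliary sequence for the thresholds `φ̄^{(n)}_k`, counted backwards from time `n`:
`phibarAux a b p n m = φ̄^{(n)}_{n-m}`. -/
noncomputable def phibarAux (a b p : ℝ) (n : ℕ) : ℕ → ℝ
  | 0 => a
  | m + 1 =>
      max a (phiAux b p n m) / ((m : ℝ) + 2)
        + (1 - 1 / ((m : ℝ) + 2)) *
            ((1 / (n : ℝ) ^ 2) * max (n : ℝ) (phibarAux a b p n m)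
              + (p / n) * max b (phibarAux a b p n m)
              + (1 - p / n - 1 / (n : ℝ) ^ 2) * max 0 (phibarAux a b p n m))

/-- The threshold `φ̄^{(n)}_k`: the expected future reward of the optimal rule at time `k`
given that the value `a` has not been probed yet.  Defined by `φ̄^{(n)}_n = a` and, for
`1 ≤ k < n`,
`φ̄^{(n)}_k = max(a, φ^{(n)}_{k+1})/(n+1−k) + (1 − 1/(n+1−k))·[(1/n²)·max(n, φ̄^{(n)}_{k+1})
  + (p/n)·max(b, φ̄^{(n)}_{k+1}) + (1 − p/n − 1/n²)·max(0, φ̄^{(n)}_{k+1})]`. -/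
noncomputable def phibar (a b p : ℝ) (n k : ℕ) : ℝ := phibarAux a b p n (n - k)

/-- `j_n`: the earliest time `k ∈ {1,…,n}` with `a ≥ φ^{(n)}_k`. -/
noncomputable def jn (a b p : ℝ) (n : ℕ) : ℕ :=
  sInf {k : ℕ | 1 ≤ k ∧ k ≤ n ∧ phi b p n k ≤ a}

/-- `k_n`: the earliest time `k ∈ {1,…,n}` with `b ≥ φ^{(n)}_k`. -/
noncomputable def kn (b p : ℝ) (n : ℕ) : ℕ :=
  sInf {k : ℕ | 1 ≤ k ∧ k ≤ n ∧ phi b p n k ≤ b}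

/-- `k̄_n`: the earliest time `k ∈ {1,…,n}` with `b ≥ φ̄^{(n)}_k`. -/
noncomputable def kbarn (a b p : ℝ) (n : ℕ) : ℕ :=
  sInf {k : ℕ | 1 ≤ k ∧ k ≤ n ∧ phibar a b p n k ≤ b}


lemma phiAux_nonneg (b p : ℝ) (hb : 0 ≤ b) (hp : 0 ≤ p) (n : ℕ) (hn0 : 0 < n)
    (hn : p / n + 1 / (n : ℝ) ^ 2 ≤ 1) : ∀ m, 0 ≤ phiAux b p n m := by
  have hn0' : (0 : ℝ) < n := by exact_mod_cast hn0
  intro m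
  induction m with
  | zero =>
      simp only [phiAux]
      apply div_nonneg _ (le_of_lt hn0')
      nlinarith
  | succ m ih =>
      simp only [phiAux]
      have h1 : (0:ℝ) ≤ 1 / (n : ℝ) ^ 2 := by positivity
      have h2 : (0:ℝ) ≤ p / n := by positivity
      have h3 : (0:ℝ) ≤ 1 - p / n - 1 / (n : ℝ) ^ 2 := by linarith
      have h4 : (0:ℝ) ≤ max (n : ℝ) (phiAux b p n m) := le_trans (le_of_lt hn0') (le_max_left _ _)
      have h5 : (0:ℝ) ≤ max b (phiAux b p n m) := le_trans hb (le_max_left _ _)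
      have h6 : (0:ℝ) ≤ max 0 (phiAux b p n m) := le_max_left _ _
      have := mul_nonneg h1 h4
      have := mul_nonneg h2 h5
      have := mul_nonneg h3 h6
      linarith

lemma phiAux_closed (b p : ℝ) (hb : 0 ≤ b) (hp : 0 ≤ p) (n : ℕ) (hn0 : 0 < n)
    (hn : p / n + 1 / (n : ℝ) ^ 2 ≤ 1) (hbn : b ≤ (n : ℝ)) :
    ∀ m, (∀ j, j < m → phiAux b p n j ≤ b) →
      phiAux b p n m
        = ((1 + b * p) / n) * ∑ j ∈ Finset.range (m + 1), (1 - p / n - 1 / (n : ℝ) ^ 2) ^ j := by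
  have hn0' : (0 : ℝ) < n := by exact_mod_cast hn0
  intro m
  induction m with
  | zero =>
      intro _
      simp [phiAux]
  | succ m ih =>
      intro hub
      have hx : phiAux b p n m ≤ b := hub m (Nat.lt_succ_self m)
      have hx0 : 0 ≤ phiAux b p n m := phiAux_nonneg b p hb hp n hn0 hn m
      have hmaxn : max (n : ℝ) (phiAux b p n m) = n := max_eq_left (le_trans hx hbn)
      have hmaxb : max b (phiAux b p n m) = b := max_eq_left hx
      have hmax0 : max 0 (phiAux b p n m) = phiAux b p n m := max_eq_right hx0
      have hrec := ih (fun j hj => hub j (Nat.lt_succ_of_lt hj))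
      simp only [phiAux, hmaxn, hmaxb, hmax0]
      rw [hrec]
      have hs : ∑ j ∈ Finset.range (m + 1 + 1), (1 - p / n - 1 / (n : ℝ) ^ 2) ^ j
          = (1 - p / n - 1 / (n : ℝ) ^ 2) * ∑ j ∈ Finset.range (m + 1),
              (1 - p / n - 1 / (n : ℝ) ^ 2) ^ j + 1 := geom_sum_succ
      rw [hs]
      have hne : (n : ℝ) ≠ 0 := ne_of_gt hn0'
      have key : 1 / (n:ℝ)^2 * n + p / n * b = (1 + b * p) / n := by
        field_simp
      linear_combination key

/-- closed form for `φ^{(n)}_k` when `φ^{(n)}_j ≤ b` for all `k < j ≤ n`. -/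
theorem stmt_8 (a b p : ℝ) (ha : 0 < a) (ha1 : a < 1) (hb : 1 < b) (hp : 0 < p)
    (n : ℕ) (hn : p / n + 1 / (n : ℝ) ^ 2 ≤ 1) (hbn : b ≤ (n : ℝ))
    (k : ℕ) (hk1 : 1 ≤ k) (hkn : k ≤ n)
    (hub : ∀ j : ℕ, k < j → j ≤ n → phi b p n j ≤ b) :
    phi b p n k
        = ((1 + b * p) / n)
            * ∑ j ∈ Finset.range (n - k + 1), (1 - p / n - 1 / (n : ℝ) ^ 2) ^ j
      ∧ phi b p n k
        = ((1 + b * p) / n)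
            * ((1 - (1 - p / n - 1 / (n : ℝ) ^ 2) ^ (n - k + 1)) / (p / n + 1 / (n : ℝ) ^ 2)) := by
  have hn0 : 0 < n := Nat.lt_of_lt_of_le hk1 hkn
  have hn0' : (0 : ℝ) < n := by exact_mod_cast hn0
  have hb0 : (0:ℝ) ≤ b := le_of_lt (lt_trans one_pos hb)
  have hub' : ∀ j, j < n - k → phiAux b p n j ≤ b := by
    intro j hj
    have h1 : k < n - j := by omega
    have h2 : n - j ≤ n := by omega
    have := hub (n - j) h1 h2
    unfold phi at this
    rwa [show n - (n - j) = j by omega] at this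
  have h1 : phi b p n k
      = ((1 + b * p) / n) * ∑ j ∈ Finset.range (n - k + 1), (1 - p / n - 1 / (n : ℝ) ^ 2) ^ j :=
    phiAux_closed b p hb0 (le_of_lt hp) n hn0 hn hbn (n - k) hub'
  refine ⟨h1, ?_⟩
  rw [h1]
  congr 1
  have hq1 : (1 - p / n - 1 / (n : ℝ) ^ 2) ≠ 1 := by
    have : 0 < p / n + 1 / (n : ℝ) ^ 2 := by positivity
    intro h; rw [sub_eq_iff_eq_add] at h; linarith
  rw [geom_sum_eq hq1]
  have hne : p / n + 1 / (n : ℝ) ^ 2 ≠ 0 := by positivity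
  rw [div_eq_div_iff (by intro h; apply hq1; linarith [sub_eq_zero.mp h]) hne]
  ring
end

section
/- For every integer n with p/n + 1/n² ≤ 1 and n ≥ b: for all 1 ≤ k ≤ n one has 0 < φ^{(n)}_k ≤ n and 0 < φ̄^{(n)}_k ≤ n; moreover, for all 1 ≤ k < n, φ^{(n)}_k ≥ φ^{(n)}_{k+1} and φ̄^{(n)}_k ≥ φ̄^{(n)}_{k+1}, i.e., both threshold sequences are nonincreasing in k. -/
noncomputable def Fx (b p : ℝ) (n : ℕ) (x : ℝ) : ℝ :=
  (1 / (n : ℝ) ^ 2) * max (n : ℝ) x + (p / n) * max b x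
    + (1 - p / n - 1 / (n : ℝ) ^ 2) * max 0 x

lemma phiAux_succ (b p : ℝ) (n m : ℕ) :
    phiAux b p n (m + 1) = Fx b p n (phiAux b p n m) := rfl


lemma phibarAux_succ (a b p : ℝ) (n m : ℕ) :
    phibarAux a b p n (m + 1) = max a (phiAux b p n m) / ((m : ℝ) + 2)
      + (1 - 1 / ((m : ℝ) + 2)) * Fx b p n (phibarAux a b p n m) := rfl


section
variable {a b p : ℝ} {n : ℕ}
variable (ha : 0 < a) (ha1 : a < 1) (hb : 1 < b) (hp : 0 < p)
    (hn : p / n + 1 / (n : ℝ) ^ 2 ≤ 1) (hbn : b ≤ (n : ℝ))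

include hb hbn in
lemma hn0 : (0:ℝ) < n := by linarith

include hb hp hn hbn in
lemma Fx_mono {x y : ℝ} (hxy : x ≤ y) : Fx b p n x ≤ Fx b p n y := by
  have h0 := hn0 hb hbn
  have hc1 : (0:ℝ) < 1 / (n:ℝ)^2 := by positivity
  have hc2 : (0:ℝ) < p / n := by positivity
  have hc3 : (0:ℝ) ≤ 1 - p / n - 1 / (n:ℝ)^2 := by linarith
  unfold Fx
  gcongr <;> simp [hxy]

include hb hp hn hbn in
lemma Fx_ge {x : ℝ} (hx : 0 < x) : x ≤ Fx b p n x := by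
  have h0 := hn0 hb hbn
  have hc1 : (0:ℝ) < 1 / (n:ℝ)^2 := by positivity
  have hc2 : (0:ℝ) < p / n := by positivity
  have hc3 : (0:ℝ) ≤ 1 - p / n - 1 / (n:ℝ)^2 := by linarith
  have h1 : (1 / (n:ℝ)^2) * x ≤ (1 / (n:ℝ)^2) * max (n:ℝ) x :=
    mul_le_mul_of_nonneg_left (le_max_right _ _) hc1.le
  have h2 : (p / n) * x ≤ (p / n) * max b x :=
    mul_le_mul_of_nonneg_left (le_max_right _ _) hc2.le
  have h3 : (1 - p / n - 1 / (n:ℝ)^2) * x ≤ (1 - p / n - 1 / (n:ℝ)^2) * max 0 x :=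
    mul_le_mul_of_nonneg_left (le_max_right _ _) hc3
  have hs : (1 / (n:ℝ)^2) * x + (p / n) * x + (1 - p / n - 1 / (n:ℝ)^2) * x = x := by ring
  unfold Fx; linarith

include hb hp hn hbn in
lemma Fx_le {x : ℝ} (hx : x ≤ (n:ℝ)) : Fx b p n x ≤ (n:ℝ) := by
  have h0 := hn0 hb hbn
  have hc1 : (0:ℝ) < 1 / (n:ℝ)^2 := by positivity
  have hc2 : (0:ℝ) < p / n := by positivity
  have hc3 : (0:ℝ) ≤ 1 - p / n - 1 / (n:ℝ)^2 := by linarith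
  have h1 : (1 / (n:ℝ)^2) * max (n:ℝ) x ≤ (1 / (n:ℝ)^2) * n :=
    mul_le_mul_of_nonneg_left (max_le le_rfl hx) hc1.le
  have h2 : (p / n) * max b x ≤ (p / n) * n :=
    mul_le_mul_of_nonneg_left (max_le hbn hx) hc2.le
  have h3 : (1 - p / n - 1 / (n:ℝ)^2) * max 0 x ≤ (1 - p / n - 1 / (n:ℝ)^2) * n :=
    mul_le_mul_of_nonneg_left (max_le h0.le hx) hc3
  have hs : (1 / (n:ℝ)^2) * (n:ℝ) + (p / n) * n + (1 - p / n - 1 / (n:ℝ)^2) * n = n := by ring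
  unfold Fx; linarith

include hb hp hn hbn in
lemma Fx_ge_phi0 {x : ℝ} (hx : 0 < x) : (1 + b * p) / n ≤ Fx b p n x := by
  have h0 := hn0 hb hbn
  have hne : (n:ℝ) ≠ 0 := ne_of_gt h0
  have hc1 : (0:ℝ) < 1 / (n:ℝ)^2 := by positivity
  have hc2 : (0:ℝ) < p / n := by positivity
  have hc3 : (0:ℝ) ≤ 1 - p / n - 1 / (n:ℝ)^2 := by linarith
  have h1 : (1 / (n:ℝ)^2) * (n:ℝ) ≤ (1 / (n:ℝ)^2) * max (n:ℝ) x :=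
    mul_le_mul_of_nonneg_left (le_max_left _ _) hc1.le
  have h2 : (p / n) * b ≤ (p / n) * max b x :=
    mul_le_mul_of_nonneg_left (le_max_left _ _) hc2.le
  have h3 : (0:ℝ) ≤ (1 - p / n - 1 / (n:ℝ)^2) * max 0 x :=
    mul_nonneg hc3 (le_max_left _ _)
  have hs : (1 / (n:ℝ)^2) * (n:ℝ) + (p / n) * b = (1 + b * p) / n := by
    field_simp
  unfold Fx; linarith

include hb hp hn hbn in
lemma phiAux_pos_le (m : ℕ) : 0 < phiAux b p n m ∧ phiAux b p n m ≤ (n:ℝ) := by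
  have h0 := hn0 hb hbn
  induction m with
  | zero =>
    constructor
    · show (0:ℝ) < (1 + b * p) / n
      positivity
    · show (1 + b * p) / n ≤ (n:ℝ)
      rw [div_le_iff₀ h0]
      have hpn : p * (n:ℝ) + 1 ≤ (n:ℝ)^2 := by
        have hne : (n:ℝ) ≠ 0 := ne_of_gt h0
        have h := mul_le_mul_of_nonneg_right hn (sq_nonneg (n:ℝ))
        have heq : (p / n + 1 / (n:ℝ)^2) * (n:ℝ)^2 = p * n + 1 := by
          field_simp
        rw [heq, one_mul] at h
        exact h
      nlinarith [mul_le_mul_of_nonneg_right hbn hp.le]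
  | succ m ih =>
    rw [phiAux_succ]
    exact ⟨lt_of_lt_of_le ih.1 (Fx_ge hb hp hn hbn ih.1), Fx_le hb hp hn hbn ih.2⟩

include hb hp hn hbn in
lemma phiAux_mono (m : ℕ) : phiAux b p n m ≤ phiAux b p n (m + 1) := by
  rw [phiAux_succ]
  exact Fx_ge hb hp hn hbn (phiAux_pos_le hb hp hn hbn m).1


include ha ha1 hb hp hn hbn in
lemma phibarAux_key (m : ℕ) :
    a ≤ phibarAux a b p n m ∧ phibarAux a b p n m ≤ (n:ℝ)
      ∧ max a (phiAux b p n m) ≤ Fx b p n (phibarAux a b p n m)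
      ∧ phibarAux a b p n m ≤ phibarAux a b p n (m + 1) := by
  have h0 : (0:ℝ) < n := by linarith
  have han : a ≤ (n:ℝ) := by linarith
  induction m with
  | zero =>
    have hFa : a ≤ Fx b p n a := Fx_ge hb hp hn hbn ha
    have hmax : max a (phiAux b p n 0) ≤ Fx b p n a :=
      max_le hFa (Fx_ge_phi0 hb hp hn hbn ha)
    refine ⟨le_rfl, han, hmax, ?_⟩
    rw [phibarAux_succ]
    have h2 : ((0:ℕ):ℝ) + 2 = 2 := by norm_num
    rw [h2]
    show a ≤ max a (phiAux b p n 0) / 2 + (1 - 1/2) * Fx b p n a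
    have h3 : a ≤ max a (phiAux b p n 0) := le_max_left _ _
    linarith
  | succ m ih =>
    obtain ⟨h1, h2, h3, h4⟩ := ih
    set y := phibarAux a b p n m with hy
    set y' := phibarAux a b p n (m + 1) with hy'
    set φ := phiAux b p n m with hφ
    have hc : (0:ℝ) < 1 / ((m:ℝ) + 2) := by positivity
    have hc1 : 1 / ((m:ℝ) + 2) ≤ 1 := by
      rw [div_le_one (by positivity)]; linarith [Nat.cast_nonneg (α := ℝ) m]
    have hyform : y' = max a φ / ((m:ℝ) + 2) + (1 - 1 / ((m:ℝ) + 2)) * Fx b p n y :=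
      phibarAux_succ a b p n m
    have hMn : max a φ ≤ (n:ℝ) := max_le han (phiAux_pos_le hb hp hn hbn m).2
    have hMa : a ≤ max a φ := le_max_left _ _
    have hφM : φ ≤ max a φ := le_max_right _ _
    have hφF : φ ≤ Fx b p n y := le_trans hφM h3
    have hFn : Fx b p n y ≤ (n:ℝ) := Fx_le hb hp hn hbn h2
    have hay' : a ≤ y' := le_trans h1 h4
    -- y' ≤ n
    have hy'n : y' ≤ (n:ℝ) := by
      rw [hyform, div_eq_mul_one_div]
      nlinarith
    -- φ_m ≤ y'
    have hφy' : φ ≤ y' := by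
      rw [hyform, div_eq_mul_one_div]
      nlinarith
    -- max a φ_{m+1} ≤ Fx y'
    have hkey : max a (phiAux b p n (m + 1)) ≤ Fx b p n y' := by
      refine max_le ?_ ?_
      · exact le_trans hay' (Fx_ge hb hp hn hbn (lt_of_lt_of_le ha hay'))
      · show Fx b p n φ ≤ Fx b p n y'
        exact Fx_mono hb hp hn hbn hφy'
    refine ⟨hay', hy'n, hkey, ?_⟩
    -- y' ≤ y''
    have hc' : (0:ℝ) < 1 / (((m:ℝ) + 1) + 2) := by positivity
    have hcc' : 1 / (((m:ℝ) + 1) + 2) ≤ 1 / ((m:ℝ) + 2) := by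
      apply one_div_le_one_div_of_le (by positivity); linarith
    have hMM : max a φ ≤ max a (phiAux b p n (m + 1)) :=
      max_le_max le_rfl (phiAux_mono hb hp hn hbn m)
    have hFF : Fx b p n y ≤ Fx b p n y' := Fx_mono hb hp hn hbn h4
    have e1 : y' = (max a φ) * (1 / ((m:ℝ) + 2))
        + (1 - 1 / ((m:ℝ) + 2)) * Fx b p n y := by
      rw [hyform, div_eq_mul_one_div]
    have e2 : phibarAux a b p n (m + 1 + 1)
        = (max a (phiAux b p n (m + 1))) * (1 / (((m:ℝ) + 1) + 2))
          + (1 - 1 / (((m:ℝ) + 1) + 2)) * Fx b p n y' := by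
      rw [phibarAux_succ, div_eq_mul_one_div, ← hy']
      push_cast
      ring
    rw [e2]
    conv_lhs => rw [e1]
    nlinarith [mul_nonneg (sub_nonneg.2 hcc') (sub_nonneg.2 h3),
      mul_nonneg hc'.le (sub_nonneg.2 hMM),
      mul_nonneg (by linarith : (0:ℝ) ≤ 1 - 1 / (((m:ℝ) + 1) + 2)) (sub_nonneg.2 hFF)]


end

/-- for every `n` with `p/n + 1/n² ≤ 1` and `n ≥ b`, the thresholds satisfy
`0 < φ^{(n)}_k ≤ n` and `0 < φ̄^{(n)}_k ≤ n` for all `1 ≤ k ≤ n`, and both sequences are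
nonincreasing in `k`. -/
theorem stmt_9 (a b p : ℝ) (ha : 0 < a) (ha1 : a < 1) (hb : 1 < b) (hp : 0 < p)
    (n : ℕ) (hn : p / n + 1 / (n : ℝ) ^ 2 ≤ 1) (hbn : b ≤ (n : ℝ)) :
    (∀ k : ℕ, 1 ≤ k → k ≤ n →
        (0 < phi b p n k ∧ phi b p n k ≤ (n : ℝ))
          ∧ (0 < phibar a b p n k ∧ phibar a b p n k ≤ (n : ℝ)))
      ∧ (∀ k : ℕ, 1 ≤ k → k < n →
        phi b p n (k + 1) ≤ phi b p n k ∧ phibar a b p n (k + 1) ≤ phibar a b p n k) := by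
  constructor
  · intro k hk1 hkn
    refine ⟨⟨(phiAux_pos_le hb hp hn hbn (n - k)).1, (phiAux_pos_le hb hp hn hbn (n - k)).2⟩, ?_, ?_⟩
    · exact lt_of_lt_of_le ha (phibarAux_key ha ha1 hb hp hn hbn (n - k)).1
    · exact (phibarAux_key ha ha1 hb hp hn hbn (n - k)).2.1
  · intro k hk1 hkn
    have hnk : n - k = (n - (k + 1)) + 1 := by omega
    constructor
    · show phiAux b p n (n - (k + 1)) ≤ phiAux b p n (n - k)
      rw [hnk]
      exact phiAux_mono hb hp hn hbn _
    · show phibarAux a b p n (n - (k + 1)) ≤ phibarAux a b p n (n - k)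
      rw [hnk]
      exact (phibarAux_key ha ha1 hb hp hn hbn _).2.2.2
end
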